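/- Let Q and Q' be monomial primary ideals of S = K[x_1,…,x_n] with √Q = (x_1,…,x_t) and √Q' = (x_{r+1},…,x_p), where 1 < r ≤ t < p ≤ n and n ≥ 4. Then sdepth(Q ∩ Q') ≤ min{ (2n + t − p − r + 2)/2, n − ⌊t/2⌋, n − ⌊(p−t)/2⌋ }, where the first bound means 2·sdepth(Q ∩ Q') ≤ 2n + t − p − r + 2. -/

import Mathlib

open MvPolynomial

variable {K : Type*} [Field K]

/-- The Stanley space `u·K[Z]`: the `K`-linear span of all `u * v` where `v` is a
monomial in the variables of `Z`. -/
noncomputable def stanleySpace {n : ℕ} (u : MvPolynomial (Fin n) K) (Z : Finset (Fin n)) :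
    Submodule K (MvPolynomial (Fin n) K) :=
  Submodule.span K { w | ∃ d : Fin n →₀ ℕ, ↑d.support ⊆ (Z : Set (Fin n)) ∧
    w = u * MvPolynomial.monomial d 1 }

/-- `u` is a monomial. -/
def IsMonomial {n : ℕ} (u : MvPolynomial (Fin n) K) : Prop :=
  ∃ d : Fin n →₀ ℕ, u = MvPolynomial.monomial d 1

/-- A monomial ideal: an ideal generated by monomials. -/
def IsMonomialIdeal {n : ℕ} (I : Ideal (MvPolynomial (Fin n) K)) : Prop :=
  ∃ G : Set (MvPolynomial (Fin n) K), (∀ u ∈ G, IsMonomial u) ∧ I = Ideal.span G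

/-- `(u i, Z i)` is a Stanley decomposition of the ideal `I`:
`I = ⊕ᵢ uᵢ K[Zᵢ]` as `K`-vector spaces, with each `uᵢ` a monomial. -/
def IsStanleyDecomp {n : ℕ} (I : Ideal (MvPolynomial (Fin n) K)) {s : ℕ}
    (u : Fin s → MvPolynomial (Fin n) K) (Z : Fin s → Finset (Fin n)) : Prop :=
  (∀ i, IsMonomial (u i)) ∧
  iSupIndep (fun i => stanleySpace (u i) (Z i)) ∧
  (⨆ i, stanleySpace (u i) (Z i)) = Submodule.restrictScalars K I

/-- The Stanley depth of a monomial ideal: the largest `k` such that there is a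
Stanley decomposition all of whose Stanley spaces have dimension at least `k`. -/
noncomputable def sdepth {n : ℕ} (I : Ideal (MvPolynomial (Fin n) K)) : ℕ :=
  sSup { k | ∃ (s : ℕ) (u : Fin s → MvPolynomial (Fin n) K) (Z : Fin s → Finset (Fin n)),
    IsStanleyDecomp I u Z ∧ ∀ i, k ≤ (Z i).card }

/-!
A Stanley decomposition of `I` partitions the exponents of the monomials of `I` into cones
`μ + ℕ^Z`. Suppose `x^γ ∉ I` but `x^γ x_i ∈ I` for all `i ∈ V`. If the cone through `x^γ x_i` had
`x_j` free and the cone through `x^γ x_j` had `x_i` free (`i ≠ j`), both would contain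
`x^γ x_i x_j`, hence coincide and contain `x^γ`. So "`x_j` is free in the cone of `x^γ x_i`" is an
asymmetric relation on `V`, some cone has at most `(|V| - 1) / 2` free variables in `V`, and
`2 sdepth I + |V| ≤ 2n + 1`. The same count over pairs gives `2 sdepth I + |V₁| + |V₂| ≤ 2n + 2`
when `x^γ x_i, x^γ x_j ∉ I` but `x^γ x_i x_j ∈ I` for all `i ∈ V₁`, `j ∈ V₂`.

For `I = Q ∩ Q'` such monomials come from saturation: multiply a monomial of `Q' \ Q` by
`x_1, …, x_t` as long as the product stays outside `Q` (second bound; the third is symmetric).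
For the first bound, saturate `1` in `x_1, …, x_r` with respect to `Q`, then in
`x_{t+1}, …, x_p` with respect to `Q'`; primality keeps the products with one more variable
outside `Q ∩ Q'`.
-/

open Finset

section Counting

theorem two_mul_sum_card_add_card_le_of_asymm {α : Type*} [DecidableEq α] (V : Finset α)
    (f : α → Finset α) (hf : ∀ i ∈ V, f i ⊆ V) (hasymm : ∀ i ∈ V, ∀ j ∈ V, j ∈ f i → i ∉ f j) :
    2 * ∑ i ∈ V, #(f i) + #V ≤ #V * #V := by
  have hcard : ∀ i ∈ V, #(f i) = ∑ j ∈ V, if j ∈ f i then 1 else 0 := fun i hi => by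
    rw [sum_boole, Nat.cast_id, filter_mem_eq_inter, inter_eq_right.2 (hf i hi)]
  calc 2 * ∑ i ∈ V, #(f i) + #V
      = ∑ i ∈ V, ∑ j ∈ V, ((if j ∈ f i then 1 else 0) + (if i ∈ f j then 1 else 0) +
          if i = j then 1 else 0) := by
        simp only [sum_add_distrib]
        rw [sum_comm (f := fun i j => if i ∈ f j then 1 else 0), ← sum_congr rfl hcard]
        simp only [sum_ite_eq, sum_ite_mem, inter_self, ← card_eq_sum_ones]
        ring
    _ ≤ ∑ i ∈ V, ∑ j ∈ V, 1 := by
        refine sum_le_sum fun i hi => sum_le_sum fun j hj => ?_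
        have := hasymm i hi j hj
        split_ifs <;> simp_all
    _ = #V * #V := by simp

theorem exists_two_mul_add_add_two_le {α β : Type*} {V₁ : Finset α} {V₂ : Finset β}
    (h₁ : V₁.Nonempty) (h₂ : V₂.Nonempty) (x y : α → β → ℕ)
    (hx : ∀ j ∈ V₂, 2 * ∑ i ∈ V₁, x i j + #V₁ ≤ #V₁ * #V₁)
    (hy : ∀ i ∈ V₁, 2 * ∑ j ∈ V₂, y i j + #V₂ ≤ #V₂ * #V₂) :
    ∃ i ∈ V₁, ∃ j ∈ V₂, 2 * (x i j + y i j) + 2 ≤ #V₁ + #V₂ := by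
  have hx' := sum_le_sum hx
  have hy' := sum_le_sum hy
  simp only [sum_add_distrib, ← mul_sum, sum_const, smul_eq_mul] at hx' hy'
  rw [sum_comm] at hx'
  suffices ∑ p ∈ V₁ ×ˢ V₂, (2 * (x p.1 p.2 + y p.1 p.2) + 2) ≤ ∑ _p ∈ V₁ ×ˢ V₂, (#V₁ + #V₂) by
    obtain ⟨⟨i, j⟩, hp, hle⟩ := exists_le_of_sum_le (h₁.product h₂) this
    exact ⟨i, (mem_product.1 hp).1, j, (mem_product.1 hp).2, hle⟩
  simp only [sum_product, sum_add_distrib, ← mul_sum, sum_const, smul_eq_mul, card_product]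
  linear_combination hx' + hy'

theorem Finset.card_le_card_inter_add_card_sub {α : Type*} [Fintype α] [DecidableEq α]
    (S V : Finset α) : #S ≤ #(S ∩ V) + (Fintype.card α - #V) := by
  have : #(S \ V) ≤ #Vᶜ := card_le_card fun l hl => mem_compl.2 (mem_sdiff.1 hl).2
  rw [card_compl] at this
  have := card_inter_add_card_sdiff S V
  omega

end Counting

section Cones

variable {σ : Type*}

/-- The exponents of the monomials in the Stanley space `x^μ K[Z]`. -/
def stanleyCone (μ : σ →₀ ℕ) (Z : Finset σ) : Set (σ →₀ ℕ) :=
  {e | μ ≤ e ∧ ∀ j ∉ Z, e j = μ j}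

theorem add_single_mem_stanleyCone {μ e : σ →₀ ℕ} {Z : Finset σ} {j : σ}
    (he : e ∈ stanleyCone μ Z) (hj : j ∈ Z) : e + Finsupp.single j 1 ∈ stanleyCone μ Z := by
  refine ⟨he.1.trans le_self_add, fun l hl => ?_⟩
  rw [Finsupp.add_apply, Finsupp.single_eq_of_ne (by rintro rfl; exact hl hj), add_zero]
  exact he.2 l hl

theorem mem_stanleyCone_of_add_single {μ e : σ →₀ ℕ} {Z : Finset σ} {i j : σ} (hij : i ≠ j)
    (hi : e + Finsupp.single i 1 ∈ stanleyCone μ Z)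
    (hj : e + Finsupp.single j 1 ∈ stanleyCone μ Z) : e ∈ stanleyCone μ Z := by
  have hle : μ ≤ e := fun l => by
    by_cases hl : l = i
    · have := hj.1 l
      rwa [Finsupp.add_apply, Finsupp.single_eq_of_ne (hl.trans_ne hij), add_zero] at this
    · have := hi.1 l
      rwa [Finsupp.add_apply, Finsupp.single_eq_of_ne hl, add_zero] at this
  refine ⟨hle, fun l hl => le_antisymm ?_ (hle l)⟩
  have := hi.2 l hl
  rw [Finsupp.add_apply] at this
  omega

/-- The Stanley spaces `x^{μ i} K[Z i]` form a Stanley decomposition of the span of the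
monomials with exponents in `E`. -/
structure IsConePartition (E : Set (σ →₀ ℕ)) {ι : Type*} (μ : ι → σ →₀ ℕ)
    (Z : ι → Finset σ) : Prop where
  mem_iff : ∀ e, e ∈ E ↔ ∃ i, e ∈ stanleyCone (μ i) (Z i)
  pairwise_disjoint :
    Pairwise fun i j => Disjoint (stanleyCone (μ i) (Z i)) (stanleyCone (μ j) (Z j))

namespace IsConePartition

variable {E : Set (σ →₀ ℕ)} {ι : Type*} {μ : ι → σ →₀ ℕ} {Z : ι → Finset σ}

theorem notMem_of_mem (hP : IsConePartition E μ Z) {γ : σ →₀ ℕ} (hγ : γ ∉ E) {i j : σ}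
    (hij : i ≠ j) {a b : ι} (ha : γ + Finsupp.single i 1 ∈ stanleyCone (μ a) (Z a))
    (hb : γ + Finsupp.single j 1 ∈ stanleyCone (μ b) (Z b)) (hja : j ∈ Z a) : i ∉ Z b := by
  intro hib
  have hja' := add_single_mem_stanleyCone ha hja
  have hib' := add_single_mem_stanleyCone hb hib
  rw [add_right_comm] at hib'
  obtain rfl : a = b := by
    by_contra hab
    exact Set.disjoint_left.1 (hP.pairwise_disjoint hab) hja' hib'
  exact hγ ((hP.mem_iff γ).2 ⟨a, mem_stanleyCone_of_add_single hij ha hb⟩)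

variable [Fintype σ] [DecidableEq σ] (hP : IsConePartition E μ Z) {k : ℕ}
  (hk : ∀ a, k ≤ #(Z a)) {γ : σ →₀ ℕ}
include hP hk

theorem two_mul_add_card_le (hγ : γ ∉ E) {V : Finset σ} (hV : V.Nonempty)
    (hγV : ∀ i ∈ V, γ + Finsupp.single i 1 ∈ E) :
    2 * k + #V ≤ 2 * Fintype.card σ + 1 := by
  have : Nonempty ι := ⟨((hP.mem_iff _).1 (hγV _ hV.choose_spec)).choose⟩
  choose! a ha using fun i hi => (hP.mem_iff _).1 (hγV i hi)
  have hsum := two_mul_sum_card_add_card_le_of_asymm V (fun i => (Z (a i) ∩ V).erase i)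
    (fun i _ => (erase_subset _ _).trans inter_subset_right) fun i hi j hj hji hij =>
      hP.notMem_of_mem hγ (ne_of_mem_erase hji).symm (ha i hi) (ha j hj)
        (mem_of_mem_inter_left (mem_of_mem_erase hji))
        (mem_of_mem_inter_left (mem_of_mem_erase hij))
  obtain ⟨i, hi, hfi⟩ : ∃ i ∈ V, 2 * #((Z (a i) ∩ V).erase i) + 1 ≤ #V := by
    refine exists_le_of_sum_le hV ?_
    rw [sum_add_distrib, ← mul_sum, sum_const, smul_eq_mul, mul_one, sum_const, smul_eq_mul]
    exact hsum
  have hZ := (Z (a i)).card_le_card_inter_add_card_sub V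
  have herase := pred_card_le_card_erase (s := Z (a i) ∩ V) (a := i)
  have := hk (a i)
  have := V.card_le_univ
  omega

theorem two_mul_add_card_add_card_le {V₁ V₂ : Finset σ} (hV : Disjoint V₁ V₂)
    (hV₁ : V₁.Nonempty) (hV₂ : V₂.Nonempty)
    (hγ₁ : ∀ i ∈ V₁, γ + Finsupp.single i 1 ∉ E) (hγ₂ : ∀ j ∈ V₂, γ + Finsupp.single j 1 ∉ E)
    (hγ₁₂ : ∀ i ∈ V₁, ∀ j ∈ V₂, γ + Finsupp.single i 1 + Finsupp.single j 1 ∈ E) :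
    2 * k + #V₁ + #V₂ ≤ 2 * Fintype.card σ + 2 := by
  have : Nonempty ι :=
    ⟨((hP.mem_iff _).1 (hγ₁₂ _ hV₁.choose_spec _ hV₂.choose_spec)).choose⟩
  choose! a ha using fun i hi j hj => (hP.mem_iff _).1 (hγ₁₂ i hi j hj)
  have ha' : ∀ i ∈ V₁, ∀ j ∈ V₂,
      γ + Finsupp.single j 1 + Finsupp.single i 1 ∈ stanleyCone (μ (a i j)) (Z (a i j)) :=
    fun i hi j hj => add_right_comm γ (Finsupp.single i 1) _ ▸ ha i hi j hj
  obtain ⟨i, hi, j, hj, hle⟩ := exists_two_mul_add_add_two_le hV₁ hV₂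
    (fun i j => #((Z (a i j) ∩ V₁).erase i)) (fun i j => #((Z (a i j) ∩ V₂).erase j))
    (fun j hj => two_mul_sum_card_add_card_le_of_asymm V₁ _
      (fun _ _ => (erase_subset _ _).trans inter_subset_right) fun i hi i' hi' h h' =>
        hP.notMem_of_mem (hγ₂ j hj) (ne_of_mem_erase h).symm (ha' i hi j hj) (ha' i' hi' j hj)
          (mem_of_mem_inter_left (mem_of_mem_erase h))
          (mem_of_mem_inter_left (mem_of_mem_erase h')))
    (fun i hi => two_mul_sum_card_add_card_le_of_asymm V₂ _
      (fun _ _ => (erase_subset _ _).trans inter_subset_right) fun j hj j' hj' h h' =>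
        hP.notMem_of_mem (hγ₁ i hi) (ne_of_mem_erase h).symm (ha i hi j hj) (ha i hi j' hj')
          (mem_of_mem_inter_left (mem_of_mem_erase h))
          (mem_of_mem_inter_left (mem_of_mem_erase h')))
  have hZ := (Z (a i j)).card_le_card_inter_add_card_sub (V₁ ∪ V₂)
  rw [inter_union_distrib_left, card_union_of_disjoint hV] at hZ
  have hunion := card_union_le (Z (a i j) ∩ V₁) (Z (a i j) ∩ V₂)
  have herase₁ := pred_card_le_card_erase (s := Z (a i j) ∩ V₁) (a := i)
  have herase₂ := pred_card_le_card_erase (s := Z (a i j) ∩ V₂) (a := j)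
  have := hk (a i j)
  have := (V₁ ∪ V₂).card_le_univ
  rw [card_union_of_disjoint hV] at this
  omega

end IsConePartition

end Cones

theorem monomial_one_mem_span_monomial_image_iff {σ R : Type*} [CommSemiring R] [Nontrivial R]
    {D : Set (σ →₀ ℕ)} {e : σ →₀ ℕ} :
    monomial e (1 : R) ∈ Submodule.span R ((monomial · 1) '' D) ↔ e ∈ D := by
  rw [← restrictSupport_eq_span, monomial_mem_restrictSupport]
  simp

theorem stanleySpace_monomial {n : ℕ} (μ : Fin n →₀ ℕ) (Z : Finset (Fin n)) :
    stanleySpace (monomial μ (1 : K)) Z =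
      Submodule.span K ((monomial · 1) '' stanleyCone μ Z) := by
  unfold stanleySpace
  congr 1
  ext w
  constructor
  · rintro ⟨d, hd, rfl⟩
    refine ⟨μ + d, ⟨le_self_add, fun j hj => ?_⟩, by rw [monomial_mul, one_mul]⟩
    rw [Finsupp.add_apply, Finsupp.notMem_support_iff.1 fun h => hj (hd h), add_zero]
  · rintro ⟨e, ⟨hle, hZ⟩, rfl⟩
    refine ⟨e - μ, fun j hj => ?_, by rw [monomial_mul, one_mul, add_tsub_cancel_of_le hle]⟩
    by_contra hjZ
    exact Finsupp.mem_support_iff.1 hj (by rw [Finsupp.tsub_apply, hZ j hjZ, tsub_self])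

theorem IsStanleyDecomp.exists_isConePartition {n s : ℕ} {I : Ideal (MvPolynomial (Fin n) K)}
    {u : Fin s → MvPolynomial (Fin n) K} {Z : Fin s → Finset (Fin n)}
    (hd : IsStanleyDecomp I u Z) :
    ∃ μ : Fin s → Fin n →₀ ℕ, IsConePartition {e | monomial e (1 : K) ∈ I} μ Z := by
  choose μ hμ using hd.1
  obtain ⟨-, hindep, hsup⟩ := hd
  simp only [hμ, stanleySpace_monomial] at hindep hsup
  refine ⟨μ, ⟨fun e => ?_, fun i j hij => Set.disjoint_left.2 fun e hi hj => ?_⟩⟩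
  · rw [Set.mem_ofPred_eq, ← Submodule.restrictScalars_mem K, ← hsup, ← Submodule.span_iUnion,
      ← Set.image_iUnion, monomial_one_mem_span_monomial_image_iff, Set.mem_iUnion]
  · exact monomial_eq_zero.not.2 (one_ne_zero (α := K)) <|
      Submodule.disjoint_def.1 (hindep.pairwiseDisjoint hij) (monomial e 1)
        (monomial_one_mem_span_monomial_image_iff.2 hi)
        (monomial_one_mem_span_monomial_image_iff.2 hj)

theorem sdepth_le_of_forall {n : ℕ} {I : Ideal (MvPolynomial (Fin n) K)} {m : ℕ}
    (h : ∀ (s : ℕ) (μ : Fin s → Fin n →₀ ℕ) (Z : Fin s → Finset (Fin n)) (k : ℕ),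
      IsConePartition {e | monomial e (1 : K) ∈ I} μ Z → (∀ i, k ≤ #(Z i)) → k ≤ m) :
    sdepth I ≤ m :=
  csSup_le' fun _ ⟨s, _, Z, hd, hk⟩ =>
    let ⟨μ, hP⟩ := hd.exists_isConePartition
    h s μ Z _ hP hk

theorem two_mul_sdepth_add_card_le {n : ℕ} {I : Ideal (MvPolynomial (Fin n) K)}
    {γ : Fin n →₀ ℕ} (hγ : monomial γ (1 : K) ∉ I) {V : Finset (Fin n)} (hV : V.Nonempty)
    (hγV : ∀ i ∈ V, monomial (γ + Finsupp.single i 1) (1 : K) ∈ I) :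
    2 * sdepth I + #V ≤ 2 * n + 1 := by
  have hsdepth : sdepth I ≤ (2 * n + 1 - #V) / 2 := sdepth_le_of_forall fun _ _ _ _ hP hk => by
    have := hP.two_mul_add_card_le hk hγ hV hγV
    rw [Fintype.card_fin] at this
    omega
  have := V.card_le_univ
  rw [Fintype.card_fin] at this
  omega

theorem two_mul_sdepth_add_card_add_card_le {n : ℕ} {I : Ideal (MvPolynomial (Fin n) K)}
    {γ : Fin n →₀ ℕ} {V₁ V₂ : Finset (Fin n)} (hV : Disjoint V₁ V₂)
    (hV₁ : V₁.Nonempty) (hV₂ : V₂.Nonempty)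
    (hγ₁ : ∀ i ∈ V₁, monomial (γ + Finsupp.single i 1) (1 : K) ∉ I)
    (hγ₂ : ∀ j ∈ V₂, monomial (γ + Finsupp.single j 1) (1 : K) ∉ I)
    (hγ₁₂ : ∀ i ∈ V₁, ∀ j ∈ V₂,
      monomial (γ + Finsupp.single i 1 + Finsupp.single j 1) (1 : K) ∈ I) :
    2 * sdepth I + #V₁ + #V₂ ≤ 2 * n + 2 := by
  have hsdepth : sdepth I ≤ (2 * n + 2 - #V₁ - #V₂) / 2 :=
    sdepth_le_of_forall fun _ _ _ _ hP hk => by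
      have := hP.two_mul_add_card_add_card_le hk hV hV₁ hV₂ hγ₁ hγ₂ hγ₁₂
      rw [Fintype.card_fin] at this
      omega
  have := (V₁ ∪ V₂).card_le_univ
  rw [Fintype.card_fin, card_union_of_disjoint hV] at this
  omega


section MonomialsInIdeals

variable {σ R : Type*} [CommSemiring R] {J J' : Ideal (MvPolynomial σ R)}

theorem monomial_one_mem_of_le {a b : σ →₀ ℕ} (hab : a ≤ b) (ha : monomial a (1 : R) ∈ J) :
    monomial b (1 : R) ∈ J :=
  J.mem_of_dvd ⟨monomial (b - a) 1, by rw [monomial_mul, one_mul, add_tsub_cancel_of_le hab]⟩ ha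

theorem exists_monomial_notMem_add_single_mem {γ : σ →₀ ℕ} (hγ : monomial γ (1 : R) ∉ J)
    {i : σ} {m : ℕ} (hm : monomial (Finsupp.single i m) (1 : R) ∈ J) :
    ∃ c, monomial (γ + Finsupp.single i c) (1 : R) ∉ J ∧
      monomial (γ + Finsupp.single i (c + 1)) (1 : R) ∈ J :=
  Nat.exists_not_and_succ_of_not_zero_of_exists (by simpa using hγ)
    ⟨m, monomial_one_mem_of_le le_add_self hm⟩

theorem exists_saturation (V : Finset σ)
    (hV : ∀ i ∈ V, ∃ m, monomial (Finsupp.single i m) (1 : R) ∈ J)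
    {γ : σ →₀ ℕ} (hγ : monomial γ (1 : R) ∉ J) :
    ∃ d : σ →₀ ℕ, (∀ j ∉ V, d j = 0) ∧ monomial (γ + d) (1 : R) ∉ J ∧
      ∀ i ∈ V, monomial (γ + d + Finsupp.single i 1) (1 : R) ∈ J := by
  classical
  induction V using Finset.induction_on with
  | empty => exact ⟨0, fun _ _ => rfl, by simpa using hγ, by simp⟩
  | insert a V _ ih =>
    obtain ⟨d, hdV, hd, hdsat⟩ := ih fun i hi => hV i (mem_insert_of_mem hi)
    obtain ⟨m, hm⟩ := hV a (mem_insert_self a V)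
    obtain ⟨c, hc, hc₁⟩ := exists_monomial_notMem_add_single_mem hd hm
    refine ⟨d + Finsupp.single a c, fun j hj => ?_, by rwa [← add_assoc], fun i hi => ?_⟩
    · rw [mem_insert, not_or] at hj
      rw [Finsupp.add_apply, hdV j hj.2, Finsupp.single_eq_of_ne hj.1, add_zero]
    · rcases mem_insert.1 hi with rfl | hi
      · rwa [← add_assoc, add_assoc _ (Finsupp.single i c), ← Finsupp.single_add]
      · refine monomial_one_mem_of_le ?_ (hdsat i hi)
        intro l
        simp only [Finsupp.add_apply]
        omega

variable {S S' : Set σ}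

theorem exists_monomial_single_mem (hJ : J.radical = Ideal.span (X '' S)) {i : σ} (hi : i ∈ S) :
    ∃ m, monomial (Finsupp.single i m) (1 : R) ∈ J := by
  have hX : (X i : MvPolynomial σ R) ∈ J.radical := hJ ▸ Ideal.subset_span ⟨i, hi, rfl⟩
  obtain ⟨m, hm⟩ := Ideal.mem_radical_iff.1 hX
  exact ⟨m, by rwa [X_pow_eq_monomial] at hm⟩

theorem monomial_one_notMem_radical [Nontrivial R] (hJ : J.radical = Ideal.span (X '' S))
    {d : σ →₀ ℕ} (hd : ∀ i ∈ S, d i = 0) : monomial d (1 : R) ∉ J.radical := by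
  rw [hJ, mem_ideal_span_X_image]
  intro h
  obtain ⟨i, hi, hdi⟩ := h d (by classical simp [coeff_monomial])
  exact hdi (hd i hi)

theorem monomial_single_notMem_radical [Nontrivial R] (hJ : J.radical = Ideal.span (X '' S))
    {i : σ} (hi : i ∉ S) : monomial (Finsupp.single i 1) (1 : R) ∉ J.radical :=
  monomial_one_notMem_radical hJ fun _ hl => Finsupp.single_eq_of_ne (ne_of_mem_of_not_mem hl hi)

theorem Ideal.IsPrimary.monomial_add_notMem (hJ : J.IsPrimary) {a b : σ →₀ ℕ}
    (ha : monomial a (1 : R) ∉ J) (hb : monomial b (1 : R) ∉ J.radical) :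
    monomial (a + b) (1 : R) ∉ J := by
  rw [← one_mul (1 : R), ← monomial_mul]
  exact fun h => ((Ideal.isPrimary_iff.1 hJ).2 h).elim ha hb

theorem exists_monomial_notMem_inf_forall_add_single_mem [Nontrivial R]
    (hJ : J.radical = Ideal.span (X '' S)) (hJ' : J'.radical = Ideal.span (X '' S'))
    {V : Finset σ} (hV : ∀ i ∈ V, i ∈ S) {i₀ : σ} (hi₀S : i₀ ∉ S) (hi₀S' : i₀ ∈ S') :
    ∃ γ : σ →₀ ℕ, monomial γ (1 : R) ∉ J ⊓ J' ∧
      ∀ i ∈ V, monomial (γ + Finsupp.single i 1) (1 : R) ∈ J ⊓ J' := by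
  obtain ⟨m, hm⟩ := exists_monomial_single_mem hJ' hi₀S'
  have hmJ : monomial (Finsupp.single i₀ m) (1 : R) ∉ J := fun h =>
    monomial_one_notMem_radical hJ
      (fun _ hl => Finsupp.single_eq_of_ne (ne_of_mem_of_not_mem hl hi₀S)) (J.le_radical h)
  obtain ⟨d, -, hd, hdsat⟩ :=
    exists_saturation V (fun i hi => exists_monomial_single_mem hJ (hV i hi)) hmJ
  refine ⟨_, fun h => hd h.1, fun i hi => ⟨hdsat i hi, monomial_one_mem_of_le ?_ hm⟩⟩
  rw [add_assoc]
  exact le_self_add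

theorem exists_monomial_add_single_notMem_inf_add_single_add_single_mem [Nontrivial R]
    (hJp : J.IsPrimary) (hJ'p : J'.IsPrimary)
    (hJ : J.radical = Ideal.span (X '' S)) (hJ' : J'.radical = Ideal.span (X '' S'))
    {V₁ V₂ : Finset σ} (hV₁ : ∀ i ∈ V₁, i ∈ S ∧ i ∉ S') (hV₂ : ∀ j ∈ V₂, j ∈ S' ∧ j ∉ S) :
    ∃ γ : σ →₀ ℕ, (∀ i ∈ V₁, monomial (γ + Finsupp.single i 1) (1 : R) ∉ J ⊓ J') ∧
      (∀ j ∈ V₂, monomial (γ + Finsupp.single j 1) (1 : R) ∉ J ⊓ J') ∧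
      ∀ i ∈ V₁, ∀ j ∈ V₂,
        monomial (γ + Finsupp.single i 1 + Finsupp.single j 1) (1 : R) ∈ J ⊓ J' := by
  have h₀ : monomial 0 (1 : R) ∉ J := by
    rw [monomial_zero', C_1]
    exact (Ideal.ne_top_iff_one J).1 hJp.ne_top
  obtain ⟨d₁, hd₁V, hd₁, hd₁sat⟩ :=
    exists_saturation V₁ (fun i hi => exists_monomial_single_mem hJ (hV₁ i hi).1) h₀
  rw [zero_add] at hd₁ hd₁sat
  have hd₁J' : monomial d₁ (1 : R) ∉ J' := fun h =>
    monomial_one_notMem_radical hJ' (fun i hi => by_contra fun hne =>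
      (hV₁ i (not_imp_comm.1 (hd₁V i) hne)).2 hi) (J'.le_radical h)
  obtain ⟨d₂, hd₂V, hd₂, hd₂sat⟩ :=
    exists_saturation V₂ (fun j hj => exists_monomial_single_mem hJ' (hV₂ j hj).1) hd₁J'
  have hd₂J : monomial d₂ (1 : R) ∉ J.radical :=
    monomial_one_notMem_radical hJ fun j hj => by_contra fun hne =>
      (hV₂ j (not_imp_comm.1 (hd₂V j) hne)).2 hj
  have hγJ : monomial (d₁ + d₂) (1 : R) ∉ J := hJp.monomial_add_notMem hd₁ hd₂J
  refine ⟨d₁ + d₂, fun i hi h => hJ'p.monomial_add_notMem hd₂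
      (monomial_single_notMem_radical hJ' (hV₁ i hi).2) h.2,
    fun j hj h => hJp.monomial_add_notMem hγJ
      (monomial_single_notMem_radical hJ (hV₂ j hj).2) h.1,
    fun i hi j hj => ⟨monomial_one_mem_of_le (fun l => ?_) (hd₁sat i hi),
      monomial_one_mem_of_le (fun l => ?_) (hd₂sat j hj)⟩⟩ <;>
  · simp only [Finsupp.add_apply]
    omega

end MonomialsInIdeals

theorem sdepth_inter_le_general_general {n t r p : ℕ} (hr : 1 < r) (hrt : r ≤ t) (htp : t < p)
    (hpn : p ≤ n)
    (Q Q' : Ideal (MvPolynomial (Fin n) K))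
    (hQp : Q.IsPrimary) (hQ'p : Q'.IsPrimary)
    (hQr : Q.radical =
      Ideal.span ((fun i => (X i : MvPolynomial (Fin n) K)) '' {i | (i : ℕ) < t}))
    (hQ'r : Q'.radical =
      Ideal.span ((fun i => (X i : MvPolynomial (Fin n) K)) ''
        {i | r ≤ (i : ℕ) ∧ (i : ℕ) < p})) :
    2 * sdepth (Q ⊓ Q') ≤ 2 * n + t - p - r + 2 ∧
    sdepth (Q ⊓ Q') ≤ n - t / 2 ∧
    sdepth (Q ⊓ Q') ≤ n - (p - t) / 2 := by
  have htn : t < n := htp.trans_le hpn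
  set V₁ : Finset (Fin n) := (range r).attachFin fun m hm => by simp at hm; omega
  set V : Finset (Fin n) := (range t).attachFin fun m hm => by simp at hm; omega
  set V₂ : Finset (Fin n) := (Ico t p).attachFin fun m hm => by simp at hm; omega
  have hV : V.Nonempty := ⟨⟨0, by omega⟩, by simp [V]; omega⟩
  have hV₁ : V₁.Nonempty := ⟨⟨0, by omega⟩, by simp [V₁]; omega⟩
  have hV₂ : V₂.Nonempty := ⟨⟨t, htn⟩, by simp [V₂, htp]⟩
  obtain ⟨γ, hγ, hγV⟩ := exists_monomial_notMem_inf_forall_add_single_mem hQr hQ'r (V := V)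
    (i₀ := ⟨t, htn⟩) (fun i hi => by simpa [V] using hi) (by simp) (by simp [hrt, htp])
  obtain ⟨γ', hγ', hγ'V₂⟩ := exists_monomial_notMem_inf_forall_add_single_mem hQ'r hQr
    (V := V₂) (i₀ := ⟨0, by omega⟩) (fun i hi => by simp [V₂] at hi ⊢; omega) (by simp; omega)
    (by simp; omega)
  rw [inf_comm] at hγ' hγ'V₂
  obtain ⟨δ, hδ₁, hδ₂, hδ₁₂⟩ := exists_monomial_add_single_notMem_inf_add_single_add_single_mem
    hQp hQ'p hQr hQ'r (V₁ := V₁) (V₂ := V₂) (fun i hi => by simp [V₁] at hi ⊢; omega)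
    (fun j hj => by simp [V₂] at hj ⊢; omega)
  have hdisj : Disjoint V₁ V₂ := disjoint_left.2 fun i hi₁ hi₂ => by
    simp [V₁, V₂] at hi₁ hi₂; omega
  have h₁ := two_mul_sdepth_add_card_add_card_le hdisj hV₁ hV₂ hδ₁ hδ₂ hδ₁₂
  have h₂ := two_mul_sdepth_add_card_le hγ hV hγV
  have h₃ := two_mul_sdepth_add_card_le hγ' hV₂ hγ'V₂
  simp only [V₁, V, V₂, card_attachFin, card_range, Nat.card_Ico] at h₁ h₂ h₃
  omega

/-- If `Q, Q'` are monomial primary ideals with `√Q = (x_1,…,x_t)` and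
`√Q' = (x_{r+1},…,x_p)`, `1 < r ≤ t < p ≤ n`, `n ≥ 4`, then
`sdepth(Q ∩ Q') ≤ min{(2n + t − p − r + 2)/2, n − ⌊t/2⌋, n − ⌊(p−t)/2⌋}`, where the first
bound means `2·sdepth(Q ∩ Q') ≤ 2n + t − p − r + 2`. -/
theorem sdepth_inter_le_general {n t r p : ℕ} (hr : 1 < r) (hrt : r ≤ t) (htp : t < p)
    (hpn : p ≤ n) (hn : 4 ≤ n)
    (Q Q' : Ideal (MvPolynomial (Fin n) K))
    (hQm : IsMonomialIdeal Q) (hQ'm : IsMonomialIdeal Q')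
    (hQp : Q.IsPrimary) (hQ'p : Q'.IsPrimary)
    (hQr : Q.radical =
      Ideal.span ((fun i => (X i : MvPolynomial (Fin n) K)) '' {i | (i : ℕ) < t}))
    (hQ'r : Q'.radical =
      Ideal.span ((fun i => (X i : MvPolynomial (Fin n) K)) ''
        {i | r ≤ (i : ℕ) ∧ (i : ℕ) < p})) :
    2 * sdepth (Q ⊓ Q') ≤ 2 * n + t - p - r + 2 ∧
    sdepth (Q ⊓ Q') ≤ n - t / 2 ∧
    sdepth (Q ⊓ Q') ≤ n - (p - t) / 2 :=
  sdepth_inter_le_general_general hr hrt htp hpn Q Q' hQp hQ'p hQr hQ'r
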